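/- arXiv:1112.2855 — 2 statements merged into one kernel-verified Lean document; each statement's English description precedes it below -/
import Mathlib

section
/- Let Γ ∈ G_γ^d and φ ∈ F_β^r under the Assumption, and let φ_m be the Galerkin solution of g = Γφ. Define σ_Y² := σ² + ⟨Γφ,φ⟩, ρ_m² := σ² + ⟨Γ(φ − φ_m), φ − φ_m⟩, and σ_m² := 2(σ_Y² + [g]_m^t[Γ]_m^{−1}[g]_m). Then for all m ≥ 1: ρ_m² ≤ σ_m² ≤ 2(σ² + 35·d⁹·r). -/
open scoped RealInnerProductSpace Classical ENNReal NNReal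
open Matrix MeasureTheory

noncomputable section

variable {H : Type} [NormedAddCommGroup H] [InnerProductSpace ℝ H] [CompleteSpace H]

/-- Spectral norm of a real matrix (largest singular value). -/
def specNorm {m : ℕ} (A : Matrix (Fin m) (Fin m) ℝ) : ℝ :=
  ‖Matrix.toEuclideanCLM (𝕜 := ℝ) A‖

/-- Galerkin matrix `[T]_m = (⟪ψ_j, T ψ_k⟫)_{1≤j,k≤m}` (0-indexed). -/
def opMat (ψ : HilbertBasis ℕ ℝ H) (T : H →L[ℝ] H) (m : ℕ) :
    Matrix (Fin m) (Fin m) ℝ :=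
  Matrix.of fun j k => ⟪ψ (j : ℕ), T (ψ (k : ℕ))⟫

/-- The ellipsoid `F_β^r`. -/
def memF (ψ : HilbertBasis ℕ ℝ H) (β : ℕ → ℝ) (r : ℝ) (h : H) : Prop :=
  Summable (fun j => β j * ⟪h, ψ j⟫ ^ 2) ∧ (∑' j, β j * ⟪h, ψ j⟫ ^ 2) ≤ r

/-- The class `G_γ^d` of strictly positive nuclear operators with sandwiched norm. -/
def memG (ψ : HilbertBasis ℕ ℝ H) (γ : ℕ → ℝ) (d : ℝ) (T : H →L[ℝ] H) : Prop :=
  (∀ x y : H, ⟪T x, y⟫ = ⟪x, T y⟫) ∧ (∀ h : H, h ≠ 0 → 0 < ⟪T h, h⟫) ∧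
    Summable (fun j => ⟪T (ψ j), ψ j⟫) ∧
    ∀ h : H,
      (d ^ 2)⁻¹ * (∑' j, γ j ^ 2 * ⟪h, ψ j⟫ ^ 2) ≤ ‖T h‖ ^ 2 ∧
      ‖T h‖ ^ 2 ≤ d ^ 2 * (∑' j, γ j ^ 2 * ⟪h, ψ j⟫ ^ 2)

/-- Coefficient vector `[g]_m` of `g = Γ φ`. -/
def gvec (ψ : HilbertBasis ℕ ℝ H) (Γ : H →L[ℝ] H) (φ : H) (m : ℕ) : Fin m → ℝ :=
  fun j => ⟪Γ φ, ψ (j : ℕ)⟫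

/-- Coefficients `[Γ]_m⁻¹ [g]_m` of the Galerkin solution. -/
def galCoef (ψ : HilbertBasis ℕ ℝ H) (Γ : H →L[ℝ] H) (φ : H) (m : ℕ) : Fin m → ℝ :=
  (opMat ψ Γ m)⁻¹ *ᵥ gvec ψ Γ φ m

/-- The Galerkin solution `φ_m`. -/
def galerkin (ψ : HilbertBasis ℕ ℝ H) (Γ : H →L[ℝ] H) (φ : H) (m : ℕ) : H :=
  ∑ j : Fin m, galCoef ψ Γ φ m j • (ψ (j : ℕ))

/-- The linear functional `ℓ(h) = Σ_j ℓ_j ⟨h, ψ_j⟩`. -/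
def ellOf (ψ : HilbertBasis ℕ ℝ H) (lc : ℕ → ℝ) (h : H) : ℝ := ∑' j, lc j * ⟪h, ψ j⟫

/-- `[ℓ]_m`. -/
def ellvec (lc : ℕ → ℝ) (m : ℕ) : Fin m → ℝ := fun j => lc (j : ℕ)

/-- Weighted (squared) norm `‖h‖_w²`. -/
def wnorm2 (ψ : HilbertBasis ℕ ℝ H) (w : ℕ → ℝ) (h : H) : ℝ := ∑' j, w j * ⟪h, ψ j⟫ ^ 2

/-- `V_m^γ = Σ_{j=1}^m ℓ_j²/γ_j`. -/
def Vgam (lc γ : ℕ → ℝ) (m : ℕ) : ℝ := ∑ j ∈ Finset.range m, lc j ^ 2 / γ j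

/-- `V_m = max_{1≤k≤m} [ℓ]_k^t [Γ]_k⁻¹ [ℓ]_k`. -/
def Vmax (ψ : HilbertBasis ℕ ℝ H) (lc : ℕ → ℝ) (Γ : H →L[ℝ] H) (m : ℕ) : ℝ :=
  ⨆ k : Fin m, ellvec lc (k + 1) ⬝ᵥ ((opMat ψ Γ (k + 1))⁻¹ *ᵥ ellvec lc (k + 1))

/-- `σ_m² = 2(σ_Y² + [g]_m^t [Γ]_m⁻¹ [g]_m)` with `σ_Y² = σ² + ⟨Γφ,φ⟩`. -/
def sigmaSqm (ψ : HilbertBasis ℕ ℝ H) (Γ : H →L[ℝ] H) (φ : H) (σ : ℝ) (m : ℕ) : ℝ :=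
  2 * ((σ ^ 2 + ⟪Γ φ, φ⟫) + gvec ψ Γ φ m ⬝ᵥ ((opMat ψ Γ m)⁻¹ *ᵥ gvec ψ Γ φ m))

/-- Theoretical penalty `p_m = 100 σ_m² V_m (1 + log n)/n`. -/
def penTheo (ψ : HilbertBasis ℕ ℝ H) (lc : ℕ → ℝ) (Γ : H →L[ℝ] H) (φ : H) (σ : ℝ)
    (n m : ℕ) : ℝ :=
  100 * sigmaSqm ψ Γ φ σ m * Vmax ψ lc Γ m * ((1 + Real.log n) / n)

/-- `R_m^ℓ[x]` (here `m ≥ 1`; 0-indexed sequences, so `γ_m` is `γ (m-1)`). -/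
def Rml (lc β γ : ℕ → ℝ) (x : ℝ) (m : ℕ) : ℝ :=
  max (∑' j, if m ≤ j then lc j ^ 2 / β j else 0)
    (max (γ (m - 1) / β (m - 1)) x * ∑ j ∈ Finset.range m, lc j ^ 2 / γ j)

/-- `R_*^ℓ[x] = min_{m ≥ 1} R_m^ℓ[x]`. -/
def Rstar (lc β γ : ℕ → ℝ) (x : ℝ) : ℝ := ⨅ m : ℕ, Rml lc β γ x (m + 1)

variable {Ω : Type}

/-- Empirical covariance matrix `[Γ̂]_m`. -/
def hatGam (ψ : HilbertBasis ℕ ℝ H) (n : ℕ) (X : Fin n → Ω → H) (m : ℕ) (ω : Ω) :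
    Matrix (Fin m) (Fin m) ℝ :=
  Matrix.of fun j k => (n : ℝ)⁻¹ * ∑ i, ⟪X i ω, ψ (j : ℕ)⟫ * ⟪X i ω, ψ (k : ℕ)⟫

/-- Empirical vector `[ĝ]_m`. -/
def hatgv (ψ : HilbertBasis ℕ ℝ H) (n : ℕ) (X : Fin n → Ω → H) (Y : Fin n → Ω → ℝ)
    (m : ℕ) (ω : Ω) : Fin m → ℝ :=
  fun j => (n : ℝ)⁻¹ * ∑ i, Y i ω * ⟪X i ω, ψ (j : ℕ)⟫

/-- The thresholded plug-in estimator `ℓ̂_m = ℓ(φ̂_m)`. -/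
def hatell (ψ : HilbertBasis ℕ ℝ H) (lc : ℕ → ℝ) (n : ℕ) (X : Fin n → Ω → H)
    (Y : Fin n → Ω → ℝ) (m : ℕ) (ω : Ω) : ℝ :=
  if IsUnit (hatGam ψ n X m ω).det ∧ specNorm (hatGam ψ n X m ω)⁻¹ ≤ (n : ℝ) then
    ellvec lc m ⬝ᵥ ((hatGam ψ n X m ω)⁻¹ *ᵥ hatgv ψ n X Y m ω)
  else 0

/-- `M_n^ℓ`. -/
def Mln (lc : ℕ → ℝ) (n : ℕ) : ℕ :=
  sSup {m | 1 ≤ m ∧ (m : ℝ) ≤ (n : ℝ) ^ ((1 : ℝ) / 4) ∧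
    (∑ j ∈ Finset.range m, lc j ^ 2) ≤ (n : ℝ)}

/-- Spectral norm of the inverse, `+∞` if singular. -/
def invNormE {m : ℕ} (A : Matrix (Fin m) (Fin m) ℝ) : ℝ≥0∞ :=
  if IsUnit A.det then ENNReal.ofReal (specNorm A⁻¹) else ⊤

/-- Random upper bound `M̂_n`. -/
def Mhat (ψ : HilbertBasis ℕ ℝ H) (lc : ℕ → ℝ) (n : ℕ) (X : Fin n → Ω → H) (ω : Ω) : ℕ :=
  let S := {m | 2 ≤ m ∧ m ≤ Mln lc n ∧
    ENNReal.ofReal ((n : ℝ) / (1 + Real.log n)) <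
      invNormE (hatGam ψ n X m ω) * ENNReal.ofReal (∑ j ∈ Finset.range m, lc j ^ 2)}
  if S.Nonempty then sInf S - 1 else Mln lc n

/-- Deterministic `M_n(a)` (with `a_m = a (m-1)` in 0-indexing). -/
def Mna (lc a : ℕ → ℝ) (n : ℕ) : ℕ :=
  let S := {m | 2 ≤ m ∧ m ≤ Mln lc n ∧
    (n : ℝ) / (1 + Real.log n) < a (m - 1) * ∑ j ∈ Finset.range m, lc j ^ 2}
  if S.Nonempty then sInf S - 1 else Mln lc n

/-- `V̂_m = max_{1≤k≤m} [ℓ]_k^t [Γ̂]_k⁻¹ [ℓ]_k`. -/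
def hatVmax (ψ : HilbertBasis ℕ ℝ H) (lc : ℕ → ℝ) (n : ℕ) (X : Fin n → Ω → H)
    (m : ℕ) (ω : Ω) : ℝ :=
  ⨆ k : Fin m, ellvec lc (k + 1) ⬝ᵥ ((hatGam ψ n X (k + 1) ω)⁻¹ *ᵥ ellvec lc (k + 1))

/-- Stochastic penalty `p̂_m`. -/
def hatpen (ψ : HilbertBasis ℕ ℝ H) (lc : ℕ → ℝ) (n : ℕ) (X : Fin n → Ω → H)
    (Y : Fin n → Ω → ℝ) (m : ℕ) (ω : Ω) : ℝ :=
  700 * (2 * (n : ℝ)⁻¹ * ∑ i, (Y i ω) ^ 2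
      + 2 * (hatgv ψ n X Y m ω ⬝ᵥ ((hatGam ψ n X m ω)⁻¹ *ᵥ hatgv ψ n X Y m ω)))
    * hatVmax ψ lc n X m ω * ((1 + Real.log n) / n)

/-- Contrast `κ_m`. -/
def contrast (ψ : HilbertBasis ℕ ℝ H) (lc : ℕ → ℝ) (n : ℕ) (X : Fin n → Ω → H)
    (Y : Fin n → Ω → ℝ) (m : ℕ) (ω : Ω) : ℝ :=
  sSup {x | ∃ k, m ≤ k ∧ k ≤ Mhat ψ lc n X ω ∧
    x = (hatell ψ lc n X Y k ω - hatell ψ lc n X Y m ω) ^ 2 - hatpen ψ lc n X Y k ω}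

/-- The fully data-driven dimension `m̂` (smallest minimizer of `κ + p̂`). -/
def mhat (ψ : HilbertBasis ℕ ℝ H) (lc : ℕ → ℝ) (n : ℕ) (X : Fin n → Ω → H)
    (Y : Fin n → Ω → ℝ) (ω : Ω) : ℕ :=
  sInf {m | 1 ≤ m ∧ m ≤ Mhat ψ lc n X ω ∧ ∀ k, 1 ≤ k → k ≤ Mhat ψ lc n X ω →
    contrast ψ lc n X Y m ω + hatpen ψ lc n X Y m ω ≤
      contrast ψ lc n X Y k ω + hatpen ψ lc n X Y k ω}

/-- The functional linear model with jointly Gaussian regressor and error,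
observed through an i.i.d. sample of size `n`. -/
structure FLModel [MeasurableSpace H] (ψ : HilbertBasis ℕ ℝ H)
    (σ : ℝ) (φ : H) (Γ : H →L[ℝ] H)
    [MeasurableSpace Ω] (P : Measure Ω) (n : ℕ)
    (X : Fin n → Ω → H) (Y : Fin n → Ω → ℝ) (ε : Fin n → Ω → ℝ) : Prop where
  measX : ∀ i, Measurable (X i)
  measEps : ∀ i, Measurable (ε i)
  modelEq : ∀ i ω, Y i ω = ⟪φ, X i ω⟫ + σ * ε i ω
  indep : ProbabilityTheory.iIndepFun (fun i ω => (X i ω, ε i ω)) P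
  identDistrib : ∀ i j, Measure.map (fun ω => (X i ω, ε i ω)) P
      = Measure.map (fun ω => (X j ω, ε j ω)) P
  centeredX : ∀ i (h : H), ∫ ω, ⟪X i ω, h⟫ ∂P = 0
  sqIntX : ∀ i, Integrable (fun ω => ‖X i ω‖ ^ 2) P
  epsMean : ∀ i, ∫ ω, ε i ω ∂P = 0
  epsVar : ∀ i, ∫ ω, (ε i ω) ^ 2 ∂P = 1
  uncorr : ∀ i (h : H), ∫ ω, ε i ω * ⟪X i ω, h⟫ ∂P = 0
  gaussian : ∀ i (k : ℕ) (hs : Fin k → H) (c : Fin k → ℝ) (c' : ℝ), ∃ v : NNReal,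
      Measure.map (fun ω => (∑ j, c j * ⟪X i ω, hs j⟫) + c' * ε i ω) P
        = ProbabilityTheory.gaussianReal 0 v
  covOp : ∀ i (h h' : H), ⟪Γ h, h'⟫ = ∫ ω, ⟪X i ω, h⟫ * ⟪X i ω, h'⟫ ∂P

/-! The Galerkin solution `φ_m` is the `Γ`-orthogonal projection of `φ` onto
`span (ψ_1, …, ψ_m)`. Hence `Q := [g]_m^t [Γ]_m⁻¹ [g]_m = ⟨Γφ_m, φ_m⟩` and
`⟨Γ(φ − φ_m), φ − φ_m⟩ = ⟨Γφ, φ⟩ − Q`, so that `0 ≤ Q ≤ ⟨Γφ, φ⟩ ≤ d ‖φ‖² ≤ d r`. -/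

section Galerkin

omit [CompleteSpace H]

variable (ψ : HilbertBasis ℕ ℝ H) {T : H →L[ℝ] H}

theorem dotProduct_opMat_mulVec (T : H →L[ℝ] H) {m : ℕ} (x y : Fin m → ℝ) :
    x ⬝ᵥ (opMat ψ T m *ᵥ y) = ⟪∑ j : Fin m, x j • ψ j, T (∑ k : Fin m, y k • ψ k)⟫ := by
  simp only [dotProduct, mulVec, opMat, of_apply, map_sum, map_smul, sum_inner, inner_sum,
    real_inner_smul_left, real_inner_smul_right, Finset.mul_sum]
  rw [Finset.sum_comm]
  refine Finset.sum_congr rfl fun j _ => Finset.sum_congr rfl fun k _ => ?_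
  ring

theorem opMat_posDef (hsymm : ∀ x y : H, ⟪T x, y⟫ = ⟪x, T y⟫)
    (hpos : ∀ h : H, h ≠ 0 → 0 < ⟪T h, h⟫) (m : ℕ) : (opMat ψ T m).PosDef := by
  refine posDef_iff_dotProduct_mulVec.mpr ⟨?_, fun x hx => ?_⟩
  · ext j k
    simp only [conjTranspose_apply, opMat, of_apply, star_trivial]
    rw [real_inner_comm, hsymm]
  · have hON : Orthonormal ℝ (fun k : Fin m => ψ k) :=
      ψ.orthonormal.comp _ Fin.val_injective
    have hne : ∑ k : Fin m, x k • ψ k ≠ 0 := fun h0 =>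
      hx (funext (Fintype.linearIndependent_iff.mp hON.linearIndependent x h0))
    simpa [dotProduct_opMat_mulVec, real_inner_comm] using hpos _ hne

theorem inner_apply_galerkin (T : H →L[ℝ] H) (φ : H) (m : ℕ) :
    ⟪T φ, galerkin ψ T φ m⟫ = galCoef ψ T φ m ⬝ᵥ gvec ψ T φ m := by
  simp only [galerkin, inner_sum, real_inner_smul_right, dotProduct, gvec]

theorem inner_apply_self_nonneg (hpos : ∀ h : H, h ≠ 0 → 0 < ⟪T h, h⟫) (h : H) :
    0 ≤ ⟪T h, h⟫ := by
  rcases eq_or_ne h 0 with rfl | hne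
  · simp
  · exact (hpos h hne).le

section Positive

variable (hsymm : ∀ x y : H, ⟪T x, y⟫ = ⟪x, T y⟫) (hpos : ∀ h : H, h ≠ 0 → 0 < ⟪T h, h⟫)
include hsymm hpos

theorem opMat_mulVec_galCoef (φ : H) (m : ℕ) :
    opMat ψ T m *ᵥ galCoef ψ T φ m = gvec ψ T φ m := by
  rw [galCoef, mulVec_mulVec, mul_nonsing_inv _ (opMat_posDef ψ hsymm hpos m).det_pos.ne'.isUnit,
    one_mulVec]

theorem inner_apply_galerkin_galerkin (φ : H) (m : ℕ) :
    ⟪T (galerkin ψ T φ m), galerkin ψ T φ m⟫ = galCoef ψ T φ m ⬝ᵥ gvec ψ T φ m := by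
  rw [real_inner_comm, galerkin, ← dotProduct_opMat_mulVec, opMat_mulVec_galCoef ψ hsymm hpos]

theorem inner_apply_sub_galerkin (φ : H) (m : ℕ) :
    ⟪T (φ - galerkin ψ T φ m), φ - galerkin ψ T φ m⟫ =
      ⟪T φ, φ⟫ - galCoef ψ T φ m ⬝ᵥ gvec ψ T φ m := by
  have hcross : ⟪T (galerkin ψ T φ m), φ⟫ = galCoef ψ T φ m ⬝ᵥ gvec ψ T φ m := by
    rw [hsymm, real_inner_comm, inner_apply_galerkin]
  rw [map_sub, inner_sub_left, inner_sub_right, inner_sub_right, inner_apply_galerkin, hcross,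
    inner_apply_galerkin_galerkin ψ hsymm hpos]
  ring

theorem galCoef_dotProduct_gvec_nonneg (φ : H) (m : ℕ) :
    0 ≤ galCoef ψ T φ m ⬝ᵥ gvec ψ T φ m :=
  inner_apply_galerkin_galerkin ψ hsymm hpos φ m ▸ inner_apply_self_nonneg hpos _

theorem galCoef_dotProduct_gvec_le (φ : H) (m : ℕ) :
    galCoef ψ T φ m ⬝ᵥ gvec ψ T φ m ≤ ⟪T φ, φ⟫ := by
  have := inner_apply_sub_galerkin ψ hsymm hpos φ m ▸ inner_apply_self_nonneg hpos _
  linarith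

end Positive

theorem sigmaSqm_eq (T : H →L[ℝ] H) (φ : H) (σ : ℝ) (m : ℕ) :
    sigmaSqm ψ T φ σ m = 2 * ((σ ^ 2 + ⟪T φ, φ⟫) + galCoef ψ T φ m ⬝ᵥ gvec ψ T φ m) := by
  rw [sigmaSqm, dotProduct_comm, galCoef]

theorem hasSum_inner_basis_sq (h : H) : HasSum (fun j => ⟪h, ψ j⟫ ^ 2) (‖h‖ ^ 2) := by
  simpa [sq, real_inner_comm, real_inner_self_eq_norm_sq] using ψ.hasSum_inner_mul_inner h h

variable {ψ}

theorem norm_sq_le_of_memF {β : ℕ → ℝ} {r : ℝ} {φ : H} (hβ : ∀ j, 1 ≤ β j)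
    (hφ : memF ψ β r φ) : ‖φ‖ ^ 2 ≤ r := by
  refine (hasSum_le (fun j => ?_) (hasSum_inner_basis_sq ψ φ) hφ.1.hasSum).trans hφ.2
  exact le_mul_of_one_le_left (sq_nonneg _) (hβ j)

theorem norm_apply_le_of_memG {γ : ℕ → ℝ} {d : ℝ} (hγ : ∀ j, |γ j| ≤ 1) (hd : 0 ≤ d)
    (hT : memG ψ γ d T) (h : H) : ‖T h‖ ≤ d * ‖h‖ := by
  have hsum := hasSum_inner_basis_sq ψ h
  have hweight : ∀ j, γ j ^ 2 * ⟪h, ψ j⟫ ^ 2 ≤ ⟪h, ψ j⟫ ^ 2 := fun j =>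
    mul_le_of_le_one_left (sq_nonneg _) ((sq_le_one_iff_abs_le_one _).2 (hγ j))
  have hweighted : ∑' j, γ j ^ 2 * ⟪h, ψ j⟫ ^ 2 ≤ ‖h‖ ^ 2 :=
    hasSum_le hweight
      (Summable.of_nonneg_of_le (fun j => by positivity) hweight hsum.summable).hasSum hsum
  refine le_of_pow_le_pow_left₀ two_ne_zero (by positivity) ?_
  calc ‖T h‖ ^ 2 ≤ d ^ 2 * ∑' j, γ j ^ 2 * ⟪h, ψ j⟫ ^ 2 := (hT.2.2.2 h).2
    _ ≤ d ^ 2 * ‖h‖ ^ 2 := by gcongr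
    _ = (d * ‖h‖) ^ 2 := by ring

end Galerkin

theorem stmt_11_general (ψ : HilbertBasis ℕ ℝ H) (γ : ℕ → ℝ) (d : ℝ) (hd : 1 ≤ d)
    (hγ1 : γ 0 = 1) (hγpos : ∀ j, 0 < γ j) (hγanti : Antitone γ)
    (β : ℕ → ℝ) (hβ1 : β 0 = 1) (hβmono : Monotone β)
    (r σ : ℝ)
    (Γ : H →L[ℝ] H) (hΓ : memG ψ γ d Γ)
    (φ : H) (hφ : memF ψ β r φ) :
    ∀ m : ℕ, 1 ≤ m →
      σ ^ 2 + ⟪Γ (φ - galerkin ψ Γ φ m), φ - galerkin ψ Γ φ m⟫ ≤ sigmaSqm ψ Γ φ σ m ∧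
      sigmaSqm ψ Γ φ σ m ≤ 2 * (σ ^ 2 + 35 * d ^ 9 * r) := by
  intro m _
  have hφr : ‖φ‖ ^ 2 ≤ r := norm_sq_le_of_memF (fun j => hβ1 ▸ hβmono (Nat.zero_le j)) hφ
  have hγ : ∀ j, |γ j| ≤ 1 := fun j =>
    abs_le.2 ⟨by linarith [hγpos j], hγ1 ▸ hγanti (Nat.zero_le j)⟩
  have hΓφ : ⟪Γ φ, φ⟫ ≤ d * r := calc
    ⟪Γ φ, φ⟫ ≤ ‖Γ φ‖ * ‖φ‖ := real_inner_le_norm _ _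
    _ ≤ d * ‖φ‖ * ‖φ‖ := by gcongr; exact norm_apply_le_of_memG hγ (by linarith) hΓ φ
    _ ≤ d * r := by rw [mul_assoc, ← sq]; gcongr
  obtain ⟨hsymm, hpos, -⟩ := hΓ
  have hQ0 := galCoef_dotProduct_gvec_nonneg ψ hsymm hpos φ m
  have hQ := galCoef_dotProduct_gvec_le ψ hsymm hpos φ m
  have hdr : d * r ≤ d ^ 9 * r :=
    mul_le_mul_of_nonneg_right (le_self_pow₀ hd (by norm_num)) ((sq_nonneg _).trans hφr)
  rw [inner_apply_sub_galerkin ψ hsymm hpos, sigmaSqm_eq]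
  constructor <;> linarith [sq_nonneg σ]

/-- Lemma A.1 (iv): `ρ_m² ≤ σ_m² ≤ 2(σ² + 35 d⁹ r)`, where
`ρ_m² = σ² + ⟨Γ(φ−φ_m), φ−φ_m⟩` and `σ_m² = 2(σ_Y² + [g]_m^t[Γ]_m⁻¹[g]_m)`. -/
theorem stmt_11 (ψ : HilbertBasis ℕ ℝ H) (γ : ℕ → ℝ) (d : ℝ) (hd : 1 ≤ d)
    (hγ1 : γ 0 = 1) (hγpos : ∀ j, 0 < γ j) (hγanti : Antitone γ)
    (hγ0 : Filter.Tendsto γ Filter.atTop (nhds 0)) (hγsum : Summable γ)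
    (β : ℕ → ℝ) (hβ1 : β 0 = 1) (hβmono : Monotone β)
    (hβ0 : Filter.Tendsto (fun j => (β j)⁻¹) Filter.atTop (nhds 0)) (r σ : ℝ) (hr : 0 < r) (hσ : 0 < σ)
    (Γ : H →L[ℝ] H) (hΓ : memG ψ γ d Γ)
    (φ : H) (hφ : memF ψ β r φ) :
    ∀ m : ℕ, 1 ≤ m →
      σ ^ 2 + ⟪Γ (φ - galerkin ψ Γ φ m), φ - galerkin ψ Γ φ m⟫ ≤ sigmaSqm ψ Γ φ σ m ∧
      sigmaSqm ψ Γ φ σ m ≤ 2 * (σ ^ 2 + 35 * d ^ 9 * r) :=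
  stmt_11_general ψ γ d hd hγ1 hγpos hγanti β hβ1 hβmono r σ Γ hΓ φ hφ

end
end

section
/- Let U_1,…,U_n be independent standard normally distributed real random variables. Then E[ ( n^{−1} Σ_{i=1}^n U_i² − 2 )_+ ] ≤ (16/n)·exp(−n/16), where (a)_+ := max(a, 0). -/
/-!
Chernoff's method applied to the positive part: since `a ≤ exp (a - 1)`, we have
`max a 0 ≤ t⁻¹ * exp (t * a - 1)` for every `t > 0`. With `t = n / 4` the expectation is at most
`(4 / n) * exp (-n / 2 - 1) * E[exp (∑ U_i² / 4)]`, and since `E[exp (t U²)] = (1 - 2t)^(-1/2)`,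
the last factor equals `√2 ^ n ≤ exp (7n / 16)`.
-/

open MeasureTheory ProbabilityTheory Real

lemma gaussianPDFReal_zero_one_mul_exp_mul_sq (t x : ℝ) :
    gaussianPDFReal 0 1 x * exp (t * x ^ 2) = (√(2 * π))⁻¹ * exp (-(1 / 2 - t) * x ^ 2) := by
  rw [gaussianPDFReal, mul_assoc, ← exp_add]
  congr 2 <;> simp; ring

lemma mgf_sq_gaussianReal {t : ℝ} (ht : t < 1 / 2) :
    mgf (fun x ↦ x ^ 2) (gaussianReal 0 1) t = (√(1 - 2 * t))⁻¹ := by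
  simp_rw [mgf, integral_gaussianReal_eq_integral_smul one_ne_zero, smul_eq_mul,
    gaussianPDFReal_zero_one_mul_exp_mul_sq, integral_const_mul, integral_gaussian]
  have h : 0 < 1 - 2 * t := by linarith
  rw [show π / (1 / 2 - t) = 2 * π / (1 - 2 * t) by field_simp, sqrt_div' _ h.le]
  field_simp

lemma max_le_inv_mul_exp {t : ℝ} (ht : 0 < t) (a : ℝ) : max a 0 ≤ t⁻¹ * exp (t * a - 1) := by
  refine max_le ?_ (by positivity)
  rw [le_inv_mul_iff₀ ht]
  linarith [add_one_le_exp (t * a - 1)]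

lemma integral_max_sub_le_mgf {Ω : Type*} [MeasurableSpace Ω] {μ : Measure Ω} {X : Ω → ℝ}
    {t : ℝ} (ht : 0 < t) (c : ℝ) (hX : Integrable (fun ω ↦ exp (t * X ω)) μ) :
    ∫ ω, max (X ω - c) 0 ∂μ ≤ t⁻¹ * exp (-(t * c) - 1) * mgf X μ t := by
  rw [mgf, ← integral_const_mul]
  refine integral_mono_of_nonneg (ae_of_all _ fun _ ↦ le_max_right _ _) (hX.const_mul _)
    (ae_of_all _ fun ω ↦ (max_le_inv_mul_exp ht _).trans_eq ?_)
  beta_reduce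
  rw [mul_assoc, ← exp_add]
  ring_nf

lemma ProbabilityTheory.iIndepFun.mgf_sum_sq_of_map_eq_gaussianReal {Ω ι : Type*}
    [MeasurableSpace Ω] {P : Measure Ω} {U : ι → Ω → ℝ} (hindep : iIndepFun U P)
    (hmeas : ∀ i, Measurable (U i))
    (hgauss : ∀ i, P.map (U i) = gaussianReal 0 1) (s : Finset ι) {t : ℝ} (ht : t < 1 / 2) :
    mgf (fun ω ↦ ∑ i ∈ s, U i ω ^ 2) P t = (√(1 - 2 * t))⁻¹ ^ s.card := by
  have hsq : iIndepFun (fun i ω ↦ U i ω ^ 2) P :=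
    hindep.comp (fun _ x ↦ x ^ 2) fun _ ↦ measurable_id.pow_const 2
  have hsum := hsq.mgf_sum (t := t) (fun i ↦ (hmeas i).pow_const 2) s
  simp only [Finset.sum_fn] at hsum
  rw [hsum]
  refine Finset.prod_eq_pow_card fun i _ ↦ ?_
  rw [← mgf_sq_gaussianReal ht, ← hgauss i, mgf_map (hmeas i).aemeasurable (by fun_prop)]
  rfl

lemma sqrt_two_pow_le_exp (n : ℕ) : √2 ^ n ≤ exp (7 / 16 * n) := by
  have h : √2 ≤ exp (7 / 16) := by
    calc √2 ≤ 7 / 16 + 1 := sqrt_le_iff.2 ⟨by norm_num, by norm_num⟩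
      _ ≤ exp (7 / 16) := add_one_le_exp _
  calc √2 ^ n ≤ exp (7 / 16) ^ n := by gcongr
    _ = exp (7 / 16 * n) := by rw [← exp_nat_mul]; ring_nf

/-- Bound on the positive part of the excess of the empirical second moment
of standard Gaussians (inequality (A.8)). -/
theorem stmt_18 {Ω : Type} [MeasurableSpace Ω] (P : Measure Ω) [IsProbabilityMeasure P]
    (n : ℕ) (hn : 1 ≤ n) (U : Fin n → Ω → ℝ)
    (hmeas : ∀ i, Measurable (U i))
    (hindep : iIndepFun U P)
    (hgauss : ∀ i, Measure.map (U i) P = gaussianReal 0 1) :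
    ∫ ω, max ((n : ℝ)⁻¹ * ∑ i, (U i ω) ^ 2 - 2) 0 ∂P
      ≤ (16 / (n : ℝ)) * Real.exp (-(n : ℝ) / 16) := by
  have hn0 : (0 : ℝ) < n := by exact_mod_cast hn
  have hmgf : mgf (fun ω ↦ (n : ℝ)⁻¹ * ∑ i, U i ω ^ 2) P (n / 4) = √2 ^ n := by
    rw [mgf_const_mul, show (n : ℝ)⁻¹ * (n / 4) = 1 / 4 by field_simp,
      hindep.mgf_sum_sq_of_map_eq_gaussianReal hmeas hgauss _ (by norm_num)]
    norm_num
  have hint : Integrable (fun ω ↦ exp (n / 4 * ((n : ℝ)⁻¹ * ∑ i, U i ω ^ 2))) P :=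
    mgf_pos_iff.1 (by rw [hmgf]; positivity)
  calc ∫ ω, max ((n : ℝ)⁻¹ * ∑ i, U i ω ^ 2 - 2) 0 ∂P
      ≤ (n / 4 : ℝ)⁻¹ * exp (-(n / 4 * 2) - 1) * √2 ^ n :=
        hmgf ▸ integral_max_sub_le_mgf (by positivity) 2 hint
    _ ≤ 4 / n * exp (-(n / 2) - 1) * exp (7 / 16 * n) := by
        rw [inv_div]; gcongr
        · linarith
        · exact sqrt_two_pow_le_exp n
    _ = 4 / n * exp (-n / 16 - 1) := by rw [mul_assoc, ← exp_add]; ring_nf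
    _ ≤ 16 / n * exp (-n / 16) := by gcongr <;> linarith
end
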